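/- If ρ : Ω → ℝ is C² smooth, positive, and log ρ is subharmonic on an open set Ω ⊆ ℂ, then for every ε > 0 the function log(1 + ε·ρ) is subharmonic on Ω. -/

import Mathlib

/-!
For `f ≠ 0` one has `Δ (log f) = (f Δf - |∇f|²) / f²`, so `log f` is subharmonic exactly where
`|∇f|² ≤ f Δf`. For `g = 1 + ερ` we get `g Δg - |∇g|² = ε Δρ + ε² (ρ Δρ - |∇ρ|²)`, and both terms
are nonnegative: the second by subharmonicity of `log ρ`, the first because `ρ Δρ ≥ |∇ρ|² ≥ 0`
with `ρ > 0`.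
-/

/-- The Laplacian of `f : ℂ → ℝ`, computed as the sum of second directional
derivatives in the directions `1` and `I`. -/
noncomputable def lap (f : ℂ → ℝ) (z : ℂ) : ℝ :=
  fderiv ℝ (fun w => fderiv ℝ f w 1) z 1 +
    fderiv ℝ (fun w => fderiv ℝ f w Complex.I) z Complex.I

open Complex

section DirectionalDerivatives

variable {E : Type*} [NormedAddCommGroup E] [NormedSpace ℝ E]

theorem fderiv_const_add_const_mul (c ε : ℝ) (f : E → ℝ) :
    fderiv ℝ (fun w => c + ε * f w) = ε • fderiv ℝ f := by
  ext1 w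
  rw [fderiv_const_add, ← fderiv_const_smul_field ε]
  rfl

theorem fderiv_fderiv_log_apply {f : E → ℝ} {z : E} (hf : ContDiffAt ℝ 2 f z) (hz : f z ≠ 0)
    (v : E) :
    fderiv ℝ (fun w => fderiv ℝ (fun x => Real.log (f x)) w v) z v
      = (f z * fderiv ℝ (fun w => fderiv ℝ f w v) z v - fderiv ℝ f z v ^ 2) / f z ^ 2 := by
  have hfderiv : (fun w => fderiv ℝ (fun x => Real.log (f x)) w v)
      =ᶠ[nhds z] fun w => (f w)⁻¹ * fderiv ℝ f w v := by
    filter_upwards [hf.eventually (by norm_num), hf.continuousAt.eventually_ne hz] with w hw hwz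
    rw [fderiv.log (hw.differentiableAt (by norm_num)) hwz]
    rfl
  have hinv : HasFDerivAt (fun w => (f w)⁻¹) ((-(f z ^ 2)⁻¹) • fderiv ℝ f z) z :=
    (hasDerivAt_inv hz).comp_hasFDerivAt z (hf.differentiableAt (by norm_num)).hasFDerivAt
  have hdir : DifferentiableAt ℝ (fun w => fderiv ℝ f w v) z :=
    ((hf.fderiv_right le_rfl).differentiableAt one_ne_zero).clm_apply (differentiableAt_const v)
  have hprod : HasFDerivAt (fun w => (f w)⁻¹ * fderiv ℝ f w v) _ z := hinv.mul hdir.hasFDerivAt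
  rw [hfderiv.fderiv_eq, hprod.fderiv]
  simp only [add_apply, smul_apply, smul_eq_mul]
  field_simp
  ring

end DirectionalDerivatives

theorem lap_const_add_const_mul (c ε : ℝ) (f : ℂ → ℝ) (z : ℂ) :
    lap (fun w => c + ε * f w) z = ε * lap f z := by
  have hdir (v : ℂ) : (fun w => fderiv ℝ (fun x => c + ε * f x) w v)
      = ε • fun w => fderiv ℝ f w v := by
    rw [fderiv_const_add_const_mul]
    rfl
  simp only [lap, hdir, fderiv_const_smul_field, Pi.smul_apply, smul_apply, smul_eq_mul, mul_add]

theorem lap_log {f : ℂ → ℝ} {z : ℂ} (hf : ContDiffAt ℝ 2 f z) (hz : f z ≠ 0) :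
    lap (fun w => Real.log (f w)) z
      = (f z * lap f z - (fderiv ℝ f z 1 ^ 2 + fderiv ℝ f z I ^ 2)) / f z ^ 2 := by
  rw [lap, lap, fderiv_fderiv_log_apply hf hz, fderiv_fderiv_log_apply hf hz]
  ring

theorem lap_log_nonneg_iff {f : ℂ → ℝ} {z : ℂ} (hf : ContDiffAt ℝ 2 f z) (hz : f z ≠ 0) :
    0 ≤ lap (fun w => Real.log (f w)) z
      ↔ fderiv ℝ f z 1 ^ 2 + fderiv ℝ f z I ^ 2 ≤ f z * lap f z := by
  rw [lap_log hf hz, le_div_iff₀ (by positivity), zero_mul, sub_nonneg]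

/-- If `ρ` is `C²`, positive, and `log ρ` is subharmonic on an open `Ω ⊆ ℂ`, then
for every `ε > 0` the function `log (1 + ε·ρ)` is subharmonic on `Ω`. -/
theorem stmt_1 (Ω : Set ℂ) (hΩ : IsOpen Ω) (ρ : ℂ → ℝ)
    (hC2 : ContDiffOn ℝ 2 ρ Ω) (hpos : ∀ z ∈ Ω, 0 < ρ z)
    (hsub : ∀ z ∈ Ω, 0 ≤ lap (fun w => Real.log (ρ w)) z) :
    ∀ ε > (0:ℝ), ∀ z ∈ Ω, 0 ≤ lap (fun w => Real.log (1 + ε * ρ w)) z := by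
  intro ε hε z hz
  have hρ : ContDiffAt ℝ 2 ρ z := hC2.contDiffAt (hΩ.mem_nhds hz)
  have hρz := hpos z hz
  have hg : ContDiffAt ℝ 2 (fun w => 1 + ε * ρ w) z :=
    contDiffAt_const.add (contDiffAt_const.mul hρ)
  have hgrad : fderiv ℝ ρ z 1 ^ 2 + fderiv ℝ ρ z I ^ 2 ≤ ρ z * lap ρ z :=
    (lap_log_nonneg_iff hρ hρz.ne').1 (hsub z hz)
  have hlap : 0 ≤ lap ρ z :=
    nonneg_of_mul_nonneg_right ((by positivity : (0 : ℝ) ≤ _).trans hgrad) hρz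
  have hgz : 1 + ε * ρ z ≠ 0 := by positivity
  rw [lap_log_nonneg_iff hg hgz, lap_const_add_const_mul,
    fderiv_const_add_const_mul]
  simp only [Pi.smul_apply, smul_apply, smul_eq_mul]
  nlinarith [mul_le_mul_of_nonneg_left hgrad (sq_nonneg ε), mul_nonneg hε.le hlap]
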